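/- arXiv:2109.06602 — 2 statements merged into one kernel-verified Lean document; each statement's English description precedes it below -/
import Mathlib

section
/- Fix p ∈ [1,∞), n ∈ ℕ, K ∈ (0,∞), a probability measure μ, and let x_1,…,x_n ∈ L_p(μ) satisfy ‖max_{i∈{1,…,n}} |x_i|‖_{L_p(μ)} ≤ K. Then for every ε ∈ (0,1) there exists d ∈ ℕ with d ≤ 32·e²·(2K)^{2p}·(log n)/ε² and points y_1,…,y_n ∈ ℓ_p^d such that for all i,j ∈ {1,…,n}: | ‖y_i − y_j‖_{ℓ_p^d} − ‖x_i − x_j‖_{L_p(μ)} | ≤ ε^{1/p}; that is, the map x_i ↦ y_i is an ε^{1/p}-isometric embedding into ℓ_p^d. -/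
open MeasureTheory
open scoped ENNReal NNReal

lemma exp_le_quad {y : ℝ} (hy : |y| ≤ 1) : Real.exp y ≤ 1 + y + (3/4) * y^2 := by
  have h := Real.exp_bound hy (n := 2) (by norm_num)
  have h2 : (∑ m ∈ Finset.range 2, y ^ m / m.factorial) = 1 + y := by
    simp [Finset.sum_range_succ]
  rw [h2] at h
  have h3 := (abs_sub_le_iff.mp h).1
  have h4 : |y| ^ 2 = y ^ 2 := sq_abs y
  have h5 : ((Nat.succ 2 : ℕ) / ((Nat.factorial 2 : ℕ) * (2:ℕ) : ℝ) : ℝ) = 3/4 := by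
    norm_num [Nat.factorial]
  rw [h4] at h3
  rw [h5] at h3
  linarith

lemma log_nat_nonneg (n : ℕ) : 0 ≤ Real.log n := by
  rcases Nat.eq_zero_or_pos n with h | h
  · simp [h]
  · exact Real.log_nonneg (by exact_mod_cast h)

lemma rpow_add_le_add_rpow' {x y r : ℝ} (hx : 0 ≤ x) (hy : 0 ≤ y) (hr : 0 ≤ r) (hr1 : r ≤ 1) :
    (x + y) ^ r ≤ x ^ r + y ^ r := by
  have key := NNReal.rpow_add_le_add_rpow (x.toNNReal) (y.toNNReal) hr hr1
  have hxy : ((x.toNNReal + y.toNNReal : NNReal) : ℝ) = x + y := by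
    simp [Real.coe_toNNReal _ hx, Real.coe_toNNReal _ hy]
  have lhs : (x + y) ^ r = (((x.toNNReal + y.toNNReal : NNReal) ^ r : NNReal) : ℝ) := by
    rw [NNReal.coe_rpow, hxy]
  have rhs : (((x.toNNReal ^ r + y.toNNReal ^ r : NNReal) : ℝ)) = x ^ r + y ^ r := by
    push_cast [NNReal.coe_rpow]
    rw [Real.coe_toNNReal _ hx, Real.coe_toNNReal _ hy]
  rw [lhs, ← rhs]
  exact_mod_cast key

lemma abs_rpow_sub_rpow_le {u v e r : ℝ} (hu : 0 ≤ u) (hv : 0 ≤ v) (he : 0 ≤ e)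
    (hr : 0 ≤ r) (hr1 : r ≤ 1) (h : |u - v| ≤ e) : |u ^ r - v ^ r| ≤ e ^ r := by
  rw [abs_sub_le_iff] at h
  rw [abs_sub_le_iff]
  constructor
  · have h1 : u ≤ v + e := by linarith [h.1]
    have := (Real.rpow_le_rpow hu h1 hr).trans (rpow_add_le_add_rpow' hv he hr hr1)
    linarith
  · have h1 : v ≤ u + e := by linarith [h.2]
    have := (Real.rpow_le_rpow hv h1 hr).trans (rpow_add_le_add_rpow' hu he hr hr1)
    linarith

lemma mgf_aux {Ω : Type*} [MeasurableSpace Ω] (ν : Measure Ω) [IsProbabilityMeasure ν]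
    (Z : Ω → ℝ) (hZ : Measurable Z) (B l : ℝ) (hB : 0 < B)
    (h0 : ∀ ω, 0 ≤ Z ω) (h1 : ∀ ω, Z ω ≤ B) (hl : |l| * B ≤ 1) :
    ∫ ω, Real.exp (l * (Z ω - ∫ ω', Z ω' ∂ν)) ∂ν ≤ Real.exp ((3/4) * l^2 * B^2) := by
  set a := ∫ ω', Z ω' ∂ν with ha
  have hZi : Integrable Z ν := by
    refine (integrable_const B).mono' hZ.aestronglyMeasurable (ae_of_all _ fun ω => ?_)
    rw [Real.norm_eq_abs, abs_of_nonneg (h0 ω)]; exact h1 ω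
  have ha0 : 0 ≤ a := integral_nonneg h0
  have haB : a ≤ B := by
    have := integral_mono hZi (integrable_const B) h1
    simpa using this
  have habs : ∀ ω, |Z ω - a| ≤ B := fun ω =>
    abs_le.mpr ⟨by linarith [h0 ω], by linarith [h1 ω]⟩
  have hsq : ∀ ω, (Z ω - a)^2 ≤ B^2 := fun ω => by
    calc (Z ω - a)^2 = |Z ω - a|^2 := (sq_abs _).symm
      _ ≤ B^2 := pow_le_pow_left₀ (abs_nonneg _) (habs ω) 2
  have hly : ∀ ω, |l * (Z ω - a)| ≤ 1 := by
    intro ω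
    rw [abs_mul]
    calc |l| * |Z ω - a| ≤ |l| * B := mul_le_mul_of_nonneg_left (habs ω) (abs_nonneg l)
      _ ≤ 1 := hl
  have hW : Integrable (fun ω => Z ω - a) ν := hZi.sub (integrable_const a)
  have hWm : Measurable fun ω => Z ω - a := hZ.sub measurable_const
  have hW2 : Integrable (fun ω => (Z ω - a)^2) ν := by
    refine (integrable_const (B^2)).mono' (hWm.pow_const 2).aestronglyMeasurable
      (ae_of_all _ fun ω => ?_)
    rw [Real.norm_eq_abs, abs_pow, sq_abs]
    exact hsq ω
  have hint : Integrable (fun ω => Real.exp (l * (Z ω - a))) ν := by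
    refine (integrable_const (Real.exp 1)).mono'
      (((hWm.const_mul l).exp).aestronglyMeasurable) (ae_of_all _ fun ω => ?_)
    rw [Real.norm_eq_abs, abs_of_pos (Real.exp_pos _)]
    exact Real.exp_le_exp.mpr ((le_abs_self _).trans (hly ω))
  have hA : Integrable (fun ω => 1 + l * (Z ω - a)) ν :=
    (integrable_const 1).add (hW.const_mul l)
  have hB2 : Integrable (fun ω => (3/4) * (l * (Z ω - a))^2) ν := by
    have h := hW2.const_mul (3/4 * l^2)
    rwa [show (fun ω : Ω => 3/4 * l^2 * (Z ω - a)^2)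
        = (fun ω : Ω => (3/4) * (l * (Z ω - a))^2) from funext fun ω => by ring] at h
  have e2 : ∫ ω, (1 + l * (Z ω - a)) ∂ν = 1 + l * ∫ ω, (Z ω - a) ∂ν := by
    rw [integral_add (integrable_const 1) (hW.const_mul l), integral_const,
      integral_const_mul]
    simp
  have e3 : ∫ ω, (3/4) * (l * (Z ω - a))^2 ∂ν = (3/4 * l^2) * ∫ ω, (Z ω - a)^2 ∂ν := by
    rw [← integral_const_mul]
    exact integral_congr_ae (ae_of_all _ fun ω => by ring)
  have hW0 : ∫ ω, (Z ω - a) ∂ν = 0 := by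
    rw [integral_sub hZi (integrable_const a), integral_const]
    simp [ha]
  have hW2B : ∫ ω, (Z ω - a)^2 ∂ν ≤ B^2 := by
    have := integral_mono hW2 (integrable_const (B^2)) hsq
    simpa using this
  calc ∫ ω, Real.exp (l * (Z ω - a)) ∂ν
      ≤ ∫ ω, (1 + l * (Z ω - a) + (3/4) * (l * (Z ω - a))^2) ∂ν :=
        integral_mono hint (hA.add hB2) fun ω => exp_le_quad (hly ω)
    _ = (∫ ω, (1 + l * (Z ω - a)) ∂ν) + ∫ ω, (3/4) * (l * (Z ω - a))^2 ∂ν :=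
        integral_add hA hB2
    _ = 1 + (3/4 * l^2) * ∫ ω, (Z ω - a)^2 ∂ν := by
        rw [e2, e3, hW0]; ring
    _ ≤ 1 + (3/4) * l^2 * B^2 := by nlinarith [sq_nonneg l]
    _ ≤ Real.exp ((3/4) * l^2 * B^2) := by
        have := Real.add_one_le_exp ((3/4) * l^2 * B^2)
        linarith

lemma chernoff_pi {Ω : Type*} [MeasureSpace Ω] [IsProbabilityMeasure (volume : Measure Ω)]
    (Z : Ω → ℝ) (hZ : Measurable Z) (B ε : ℝ) (hB : 0 < B)
    (h0 : ∀ ω, 0 ≤ Z ω) (h1 : ∀ ω, Z ω ≤ B) (hε : 0 < ε) (hεB : ε ≤ B) (d : ℕ) :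
    (volume : Measure (Fin d → Ω)) {σ | (d : ℝ) * ε ≤ ∑ s, (Z (σ s) - ∫ ω, Z ω)} ≤
      ENNReal.ofReal (Real.exp (-(d : ℝ) * ε^2 / (4 * B^2))) := by
  set a := ∫ ω, Z ω with ha
  set l : ℝ := ε / B^2 with hldef
  have hl0 : 0 < l := div_pos hε (by positivity)
  have hlB : |l| * B ≤ 1 := by
    rw [abs_of_pos hl0, hldef]
    rw [div_mul_eq_mul_div, div_le_one (by positivity)]
    nlinarith
  -- the single-variable mgf bound
  have hone := mgf_aux (volume : Measure Ω) Z hZ B l hB h0 h1 hlB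
  have hone' : ∫ ω, Real.exp (l * (Z ω - a)) ≤ Real.exp ((3/4) * l^2 * B^2) := hone
  -- integrability of one factor
  have hWm : Measurable fun ω : Ω => Z ω - a := hZ.sub measurable_const
  have hfac_int : Integrable (fun ω : Ω => Real.exp (l * (Z ω - a))) volume := by
    refine (integrable_const (Real.exp (l * B))).mono'
      (((hWm.const_mul l).exp).aestronglyMeasurable) (ae_of_all _ fun ω => ?_)
    rw [Real.norm_eq_abs, abs_of_pos (Real.exp_pos _)]
    apply Real.exp_le_exp.mpr
    have h00 : (0:ℝ) ≤ a := integral_nonneg h0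
    have : Z ω - a ≤ B := by linarith [h1 ω]
    exact mul_le_mul_of_nonneg_left this hl0.le
  have hfac_nonneg : 0 ≤ ∫ ω : Ω, Real.exp (l * (Z ω - a)) :=
    integral_nonneg fun ω => (Real.exp_pos _).le
  -- Fubini: the mgf of the sum factors
  set F : (Fin d → Ω) → ℝ := fun σ => ∏ s, Real.exp (l * (Z (σ s) - a)) with hF
  have hF_eq : ∀ σ : Fin d → Ω, F σ = Real.exp (l * ∑ s, (Z (σ s) - a)) := by
    intro σ
    rw [Finset.mul_sum, Real.exp_sum]
  have hF_int : Integrable F volume :=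
    Integrable.fintype_prod (f := fun _ : Fin d => fun ω : Ω => Real.exp (l * (Z ω - a)))
      (fun _ => hfac_int)
  have hF_integral : ∫ σ : Fin d → Ω, F σ ≤ Real.exp ((d : ℝ) * ((3/4) * l^2 * B^2)) := by
    have := integral_fintype_prod_eq_prod
      (fun _ : Fin d => fun ω : Ω => Real.exp (l * (Z ω - a))) (μ := fun _ : Fin d => (volume : Measure Ω))
    rw [← MeasureTheory.volume_pi] at this
    rw [hF]; beta_reduce; rw [this]
    calc (∏ _s : Fin d, ∫ ω : Ω, Real.exp (l * (Z ω - a)))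
        ≤ ∏ _s : Fin d, Real.exp ((3/4) * l^2 * B^2) :=
          Finset.prod_le_prod (fun _ _ => hfac_nonneg) (fun _ _ => hone')
      _ = Real.exp ((d : ℝ) * ((3/4) * l^2 * B^2)) := by
          rw [Finset.prod_const, ← Real.exp_nat_mul]
          simp
  -- Markov
  have hmarkov := mul_meas_ge_le_integral_of_nonneg
    (μ := (volume : Measure (Fin d → Ω))) (f := F)
    (ae_of_all _ fun σ => Finset.prod_nonneg fun s _ => (Real.exp_pos _).le)
    hF_int (Real.exp (l * ((d : ℝ) * ε)))
  have hsubset : {σ : Fin d → Ω | (d : ℝ) * ε ≤ ∑ s, (Z (σ s) - a)}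
      ⊆ {σ | Real.exp (l * ((d : ℝ) * ε)) ≤ F σ} := by
    intro σ hσ
    simp only [Set.mem_setOf_eq] at hσ ⊢
    rw [hF_eq σ]
    exact Real.exp_le_exp.mpr (mul_le_mul_of_nonneg_left hσ hl0.le)
  have hfin : (volume : Measure (Fin d → Ω)) Set.univ = 1 := by
    rw [MeasureTheory.volume_pi, Measure.pi_univ]
    simp
  have hne_top : (volume : Measure (Fin d → Ω))
      {σ | (d : ℝ) * ε ≤ ∑ s, (Z (σ s) - a)} ≠ ⊤ := by
    refine (lt_of_le_of_lt (measure_mono (Set.subset_univ _)) ?_).ne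
    rw [hfin]; exact ENNReal.one_lt_top
  have hne_top2 : (volume : Measure (Fin d → Ω))
      {σ | Real.exp (l * ((d : ℝ) * ε)) ≤ F σ} ≠ ⊤ := by
    refine (lt_of_le_of_lt (measure_mono (Set.subset_univ _)) ?_).ne
    rw [hfin]; exact ENNReal.one_lt_top
  -- combine
  have htoReal : ((volume : Measure (Fin d → Ω))
      {σ | (d : ℝ) * ε ≤ ∑ s, (Z (σ s) - a)}).toReal
      ≤ Real.exp (-(d : ℝ) * ε^2 / (4 * B^2)) := by
    have hmono : ((volume : Measure (Fin d → Ω))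
        {σ | (d : ℝ) * ε ≤ ∑ s, (Z (σ s) - a)}).toReal
        ≤ ((volume : Measure (Fin d → Ω))
        {σ | Real.exp (l * ((d : ℝ) * ε)) ≤ F σ}).toReal :=
      ENNReal.toReal_mono hne_top2 (measure_mono hsubset)
    have hpos : (0 : ℝ) < Real.exp (l * ((d : ℝ) * ε)) := Real.exp_pos _
    have h2 : ((volume : Measure (Fin d → Ω))
        {σ | Real.exp (l * ((d : ℝ) * ε)) ≤ F σ}).toReal
        ≤ Real.exp ((d : ℝ) * ((3/4) * l^2 * B^2)) / Real.exp (l * ((d : ℝ) * ε)) := by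
      rw [le_div_iff₀ hpos, mul_comm]
      exact hmarkov.trans hF_integral
    refine (hmono.trans h2).trans_eq ?_
    rw [← Real.exp_sub]
    congr 1
    rw [hldef]
    field_simp
    ring
  calc (volume : Measure (Fin d → Ω)) {σ | (d : ℝ) * ε ≤ ∑ s, (Z (σ s) - a)}
      = ENNReal.ofReal (((volume : Measure (Fin d → Ω))
          {σ | (d : ℝ) * ε ≤ ∑ s, (Z (σ s) - a)}).toReal) :=
        (ENNReal.ofReal_toReal hne_top).symm
    _ ≤ ENNReal.ofReal (Real.exp (-(d : ℝ) * ε^2 / (4 * B^2))) :=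
        ENNReal.ofReal_le_ofReal htoReal

lemma chernoff_pi' {Ω : Type*} [MeasurableSpace Ω] (ν : Measure Ω) [IsProbabilityMeasure ν]
    (Z : Ω → ℝ) (hZ : Measurable Z) (B ε : ℝ) (hB : 0 < B)
    (h0 : ∀ ω, 0 ≤ Z ω) (h1 : ∀ ω, Z ω ≤ B) (hε : 0 < ε) (hεB : ε ≤ B) (d : ℕ) :
    Measure.pi (fun _ : Fin d => ν) {σ | (d : ℝ) * ε ≤ ∑ s, (Z (σ s) - ∫ ω, Z ω ∂ν)} ≤
      ENNReal.ofReal (Real.exp (-(d : ℝ) * ε^2 / (4 * B^2))) := by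
  letI : MeasureSpace Ω := ⟨ν⟩
  haveI : IsProbabilityMeasure (volume : Measure Ω) := ‹IsProbabilityMeasure ν›
  have h := chernoff_pi Z hZ B ε hB h0 h1 hε hεB d
  have hvol : (volume : Measure (Fin d → Ω)) = Measure.pi (fun _ : Fin d => ν) :=
    MeasureTheory.volume_pi
  rw [hvol] at h
  exact h

set_option maxHeartbeats 1000000 in
/-- **Theorem 1 restated as an `ε^{1/p}`-isometric embedding.**  Fix `p ∈ [1,∞)`, `n ∈ ℕ`,
`K ∈ (0,∞)`, a probability measure `μ` and a `K`-incompressible family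
`x₁, …, xₙ ∈ L_p(μ)`.  Then for every `ε ∈ (0,1)` there is
`d ≤ 32 e² (2K)^{2p} (log n)/ε²` and `y₁, …, yₙ ∈ ℓ_p^d` with
`| ‖y_i - y_j‖_{ℓ_p^d} - ‖x_i - x_j‖_{L_p(μ)} | ≤ ε^{1/p}` for all `i,j`. -/
theorem incompressible_eps_isometric_embedding
    (p : ℝ) (hp : 1 ≤ p) (n : ℕ) (K : ℝ) (hK : 0 < K)
    {Ω : Type*} [MeasurableSpace Ω] (μ : Measure Ω) [IsProbabilityMeasure μ]
    (x : Fin n → Ω → ℝ) (hx : ∀ i, MemLp (x i) (ENNReal.ofReal p) μ)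
    (hinc : eLpNorm (fun ω => ⨆ i, |x i ω|) (ENNReal.ofReal p) μ ≤ ENNReal.ofReal K)
    (ε : ℝ) (hε : ε ∈ Set.Ioo (0 : ℝ) 1) :
    ∃ (d : ℕ) (y : Fin n → Fin d → ℝ),
      (d : ℝ) ≤ 32 * Real.exp 1 ^ 2 * (2 * K) ^ (2 * p) * Real.log n / ε ^ 2 ∧
      ∀ i j,
        |(∑ s, |y i s - y j s| ^ p) ^ (1 / p)
            - (∫ ω, |x i ω - x j ω| ^ p ∂μ) ^ (1 / p)| ≤ ε ^ (1 / p) := by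
  obtain ⟨hε0, hε1⟩ := hε
  have hp0 : (0 : ℝ) < p := lt_of_lt_of_le one_pos hp
  set q : ℝ≥0∞ := ENNReal.ofReal p with hqdef
  have hq0 : q ≠ 0 := (ENNReal.ofReal_pos.mpr hp0).ne'
  have hqT : q ≠ ∞ := ENNReal.ofReal_ne_top
  have hqt : q.toReal = p := ENNReal.toReal_ofReal hp0.le
  set A : Fin n → Fin n → ℝ := fun i j => ∫ ω, |x i ω - x j ω| ^ p ∂μ with hAdef
  have hA0 : ∀ i j, 0 ≤ A i j := fun i j =>
    integral_nonneg fun ω => Real.rpow_nonneg (abs_nonneg _) p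
  have hRHS0 : 0 ≤ 32 * Real.exp 1 ^ 2 * (2 * K) ^ (2 * p) * Real.log n / ε ^ 2 := by
    have h1 := log_nat_nonneg n
    have h2 : (0:ℝ) ≤ (2 * K) ^ (2 * p) := Real.rpow_nonneg (by linarith) _
    have h3 : (0:ℝ) ≤ 32 * Real.exp 1 ^ 2 := by positivity
    positivity
  by_cases hsm : ∀ i j, A i j ≤ ε
  · -- small distances: dimension 0 suffices
    refine ⟨0, fun _ _ => 0, by simpa using hRHS0, fun i j => ?_⟩
    have h1 : (∑ s : Fin 0, |(0:ℝ) - 0| ^ p) = 0 := by simp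
    rw [h1, Real.zero_rpow (by positivity : (1:ℝ)/p ≠ 0), zero_sub, abs_neg,
      abs_of_nonneg (Real.rpow_nonneg (hA0 i j) _)]
    exact Real.rpow_le_rpow (hA0 i j) (hsm i j) (by positivity)
  · push_neg at hsm
    obtain ⟨i₀, j₀, hij⟩ := hsm
    haveI : Nonempty (Fin n) := ⟨i₀⟩
    -- measurable representatives
    set x' : Fin n → Ω → ℝ := fun i => ((hx i).1.mk (x i)) with hx'def
    have hx'meas : ∀ i, Measurable (x' i) := fun i => ((hx i).1.stronglyMeasurable_mk).measurable
    have hxx' : ∀ i, x i =ᵐ[μ] x' i := fun i => (hx i).1.ae_eq_mk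
    have hx'ℒ : ∀ i, MemLp (x' i) q μ := fun i => (hx i).ae_eq (hxx' i)
    set M : Ω → ℝ := fun ω => ⨆ i, |x' i ω| with hMdef
    have hM_meas : Measurable M := Measurable.iSup fun i => (hx'meas i).abs
    have hMixle : ∀ i ω, |x' i ω| ≤ M ω := fun i ω =>
      le_ciSup (f := fun k => |x' k ω|) (Set.Finite.bddAbove (Set.finite_range _)) i
    have hM0 : ∀ ω, 0 ≤ M ω := fun ω => (abs_nonneg _).trans (hMixle i₀ ω)
    have hdiff : ∀ i j ω, |x' i ω - x' j ω| ≤ 2 * M ω := fun i j ω => by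
      calc |x' i ω - x' j ω| ≤ |x' i ω| + |x' j ω| := abs_sub _ _
        _ ≤ 2 * M ω := by linarith [hMixle i ω, hMixle j ω]
    -- the total mass
    set Vl : ℝ≥0∞ := ∫⁻ ω, ENNReal.ofReal (M ω ^ p) ∂μ with hVldef
    have hVlK : Vl ≤ ENNReal.ofReal (K ^ p) := by
      have hsup_ae : (fun ω => ⨆ i, |x i ω|) =ᵐ[μ] M := by
        have hall : ∀ᵐ ω ∂μ, ∀ i, x i ω = x' i ω := (ae_all_iff).mpr hxx'
        filter_upwards [hall] with ω hω
        exact iSup_congr fun i => by rw [hω i]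
      rw [eLpNorm_congr_ae hsup_ae, eLpNorm_eq_lintegral_rpow_enorm_toReal hq0 hqT, hqt] at hinc
      have h1 : (∫⁻ ω, ‖M ω‖ₑ ^ p ∂μ) = Vl := by
        refine lintegral_congr fun ω => ?_
        rw [Real.enorm_eq_ofReal (hM0 ω), ← ENNReal.ofReal_rpow_of_nonneg (hM0 ω) hp0.le]
      rw [h1] at hinc
      have h2 := ENNReal.rpow_le_rpow hinc hp0.le
      rwa [← ENNReal.rpow_mul, one_div_mul_cancel hp0.ne', ENNReal.rpow_one,
        ENNReal.ofReal_rpow_of_nonneg hK.le hp0.le] at h2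
    have hVl_ne_top : Vl ≠ ⊤ := (hVlK.trans_lt ENNReal.ofReal_lt_top).ne
    set V : ℝ := Vl.toReal with hVdef
    have hV_nonneg : 0 ≤ V := ENNReal.toReal_nonneg
    have hVK : V ≤ K ^ p := ENNReal.toReal_le_of_le_ofReal (by positivity) hVlK
    -- integrability of M^p
    have hMp_meas : Measurable fun ω => M ω ^ p := hM_meas.pow measurable_const
    have hMp_int : Integrable (fun ω => M ω ^ p) μ := by
      refine ⟨hMp_meas.aestronglyMeasurable, ?_⟩
      rw [hasFiniteIntegral_iff_ofReal (ae_of_all _ fun ω => Real.rpow_nonneg (hM0 ω) p)]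
      exact hVl_ne_top.lt_top
    have hMp_integral : ∫ ω, M ω ^ p ∂μ = V := by
      rw [integral_eq_lintegral_of_nonneg_ae
        (ae_of_all _ fun ω => Real.rpow_nonneg (hM0 ω) p) hMp_meas.aestronglyMeasurable]
    -- A in terms of x'
    have hAx' : ∀ i j, A i j = ∫ ω, |x' i ω - x' j ω| ^ p ∂μ := fun i j => by
      refine integral_congr_ae ?_
      filter_upwards [hxx' i, hxx' j] with ω h1 h2
      rw [h1, h2]
    have hΔ_int : ∀ i j, Integrable (fun ω => |x' i ω - x' j ω| ^ p) μ := fun i j => by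
      have h := ((hx'ℒ i).sub (hx'ℒ j)).integrable_norm_rpow hq0 hqT
      simp only [hqt, Pi.sub_apply, Real.norm_eq_abs] at h
      exact h
    have hAB' : ∀ i j, A i j ≤ 2 ^ p * V := fun i j => by
      rw [hAx' i j, ← hMp_integral, ← integral_const_mul]
      refine integral_mono (hΔ_int i j) (hMp_int.const_mul _) fun ω => ?_
      calc |x' i ω - x' j ω| ^ p ≤ (2 * M ω) ^ p :=
            Real.rpow_le_rpow (abs_nonneg _) (hdiff i j ω) hp0.le
        _ = 2 ^ p * M ω ^ p := Real.mul_rpow (by norm_num) (hM0 ω)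
    set B' : ℝ := 2 ^ p * V with hB'def
    have h2p : (0:ℝ) < 2 ^ p := Real.rpow_pos_of_pos (by norm_num) p
    have hεB' : ε < B' := lt_of_lt_of_le hij (hAB' i₀ j₀)
    have hB'0 : 0 < B' := lt_trans hε0 hεB'
    have hV0 : 0 < V := by
      rcases lt_or_ge 0 V with h | h
      · exact h
      · exfalso; nlinarith
    have hVl0 : Vl ≠ 0 := by
      intro h
      rw [hVdef, h] at hV0
      simp at hV0
    have hVl_eq : Vl = ENNReal.ofReal V := (ENNReal.ofReal_toReal hVl_ne_top).symm
    -- the sampling measure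
    set dens : Ω → ℝ≥0∞ := fun ω => ENNReal.ofReal (M ω ^ p) / Vl with hdensdef
    have hdens_meas : Measurable dens := hMp_meas.ennreal_ofReal.div_const _
    set ν : Measure Ω := μ.withDensity dens with hνdef
    have hν_prob : IsProbabilityMeasure ν := by
      constructor
      rw [hνdef, withDensity_apply _ MeasurableSet.univ, Measure.restrict_univ, hdensdef]
      simp_rw [div_eq_mul_inv]
      rw [lintegral_mul_const _ hMp_meas.ennreal_ofReal, ← hVldef]
      exact ENNReal.mul_inv_cancel hVl0 hVl_ne_top
    -- the rescaled functions and distance functions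
    set g : Fin n → Ω → ℝ := fun i ω => x' i ω * (V / M ω ^ p) ^ (1/p) with hgdef
    set Z : Fin n → Fin n → Ω → ℝ := fun i j ω => |g i ω - g j ω| ^ p with hZdef
    have hZ_meas : ∀ i j, Measurable (Z i j) := fun i j => by
      have hgm : ∀ k, Measurable (g k) := fun k =>
        (hx'meas k).mul ((measurable_const.div hMp_meas).pow measurable_const)
      exact (((hgm i).sub (hgm j)).abs).pow measurable_const
    have hZ0 : ∀ i j ω, 0 ≤ Z i j ω := fun i j ω => Real.rpow_nonneg (abs_nonneg _) p
    have hdiv_nonneg : ∀ ω, (0:ℝ) ≤ V / M ω ^ p := fun ω =>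
      div_nonneg hV0.le (Real.rpow_nonneg (hM0 ω) p)
    have hZform : ∀ i j ω, Z i j ω = |x' i ω - x' j ω| ^ p * (V / M ω ^ p) := by
      intro i j ω
      have hc0 : (0:ℝ) ≤ (V / M ω ^ p) ^ (1/p) := Real.rpow_nonneg (hdiv_nonneg ω) _
      calc Z i j ω = |(x' i ω - x' j ω) * (V / M ω ^ p) ^ (1/p)| ^ p := by
            rw [hZdef]; simp only [hgdef]; rw [← sub_mul]
        _ = (|x' i ω - x' j ω| * (V / M ω ^ p) ^ (1/p)) ^ p := by
            rw [abs_mul, abs_of_nonneg hc0]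
        _ = |x' i ω - x' j ω| ^ p * (((V / M ω ^ p) ^ (1/p)) ^ p) :=
            Real.mul_rpow (abs_nonneg _) hc0
        _ = |x' i ω - x' j ω| ^ p * (V / M ω ^ p) := by
            rw [← Real.rpow_mul (hdiv_nonneg ω), one_div_mul_cancel hp0.ne', Real.rpow_one]
    have hMp0 : ∀ ω, M ω = 0 → |x' i₀ ω - x' i₀ ω| = 0 := fun ω h => by simp
    have hZB' : ∀ i j ω, Z i j ω ≤ B' := by
      intro i j ω
      rw [hZform]
      have h1 : |x' i ω - x' j ω| ^ p ≤ 2 ^ p * M ω ^ p := by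
        calc |x' i ω - x' j ω| ^ p ≤ (2 * M ω) ^ p :=
              Real.rpow_le_rpow (abs_nonneg _) (hdiff i j ω) hp0.le
          _ = 2 ^ p * M ω ^ p := Real.mul_rpow (by norm_num) (hM0 ω)
      have h2 : M ω ^ p * (V / M ω ^ p) ≤ V := by
        rcases eq_or_ne (M ω ^ p) 0 with h | h
        · rw [h]; simp [hV0.le]
        · rw [mul_comm, div_mul_cancel₀ _ h]
      calc |x' i ω - x' j ω| ^ p * (V / M ω ^ p)
          ≤ (2 ^ p * M ω ^ p) * (V / M ω ^ p) :=
            mul_le_mul_of_nonneg_right h1 (hdiv_nonneg ω)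
        _ = 2 ^ p * (M ω ^ p * (V / M ω ^ p)) := by ring
        _ ≤ 2 ^ p * V := by nlinarith [h2]
    -- mean of Z over ν is A
    have hZmean : ∀ i j, ∫ ω, Z i j ω ∂ν = A i j := by
      intro i j
      have hptwise : ∀ ω, dens ω * ENNReal.ofReal (Z i j ω)
          = ENNReal.ofReal (|x' i ω - x' j ω| ^ p) := by
        intro ω
        rcases eq_or_ne (M ω) 0 with h | h
        · have hMp : M ω ^ p = 0 := by rw [h]; exact Real.zero_rpow hp0.ne'
          have hΔ : x' i ω - x' j ω = 0 := by
            have h1 := hMixle i ω; have h2 := hMixle j ω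
            rw [h] at h1 h2
            have : x' i ω = 0 := abs_eq_zero.mp (le_antisymm h1 (abs_nonneg _))
            have h4 : x' j ω = 0 := abs_eq_zero.mp (le_antisymm h2 (abs_nonneg _))
            rw [this, h4, sub_zero]
          simp only [hdensdef]
          simp [hMp, hΔ, Real.zero_rpow hp0.ne']
        · have hMp : M ω ^ p ≠ 0 := by
            intro hc
            exact h (le_antisymm (le_of_eq (by
              exact absurd hc (ne_of_gt (Real.rpow_pos_of_pos (lt_of_le_of_ne (hM0 ω) (Ne.symm h)) p)))) (hM0 ω))
          have hMppos : 0 < M ω ^ p := Real.rpow_pos_of_pos (lt_of_le_of_ne (hM0 ω) (Ne.symm h)) p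
          simp only [hdensdef]
          rw [hVl_eq, ← ENNReal.ofReal_div_of_pos hV0, ← ENNReal.ofReal_mul
            (div_nonneg (Real.rpow_nonneg (hM0 ω) p) hV0.le)]
          congr 1
          rw [hZform]
          field_simp
        -- end pointwise
      have h1 : ∫ ω, Z i j ω ∂ν
          = (∫⁻ ω, ENNReal.ofReal (Z i j ω) ∂ν).toReal := by
        rw [integral_eq_lintegral_of_nonneg_ae (ae_of_all _ fun ω => hZ0 i j ω)
          (hZ_meas i j).aestronglyMeasurable]
      have h2 : ∫⁻ ω, ENNReal.ofReal (Z i j ω) ∂ν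
          = ∫⁻ ω, ENNReal.ofReal (|x' i ω - x' j ω| ^ p) ∂μ := by
        rw [hνdef, lintegral_withDensity_eq_lintegral_mul μ hdens_meas
          ((hZ_meas i j).ennreal_ofReal)]
        exact lintegral_congr fun ω => hptwise ω
      rw [h1, h2, hAx' i j, integral_eq_lintegral_of_nonneg_ae (f := fun ω => |x' i ω - x' j ω| ^ p)
        (ae_of_all _ fun ω => Real.rpow_nonneg (abs_nonneg _) p)
        (((((hx'meas i).sub (hx'meas j)).abs).pow measurable_const)).aestronglyMeasurable]
    -- Z is integrable w.r.t. ν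
    have hZint : ∀ i j, Integrable (Z i j) ν := fun i j =>
      (integrable_const B').mono' (hZ_meas i j).aestronglyMeasurable
        (ae_of_all _ fun ω => by
          rw [Real.norm_eq_abs, abs_of_nonneg (hZ0 i j ω)]; exact hZB' i j ω)
    have hAleB' : ∀ i j, A i j ≤ B' := fun i j => by
      rw [← hZmean i j]
      have := integral_mono (hZint i j) (integrable_const B') (fun ω => hZB' i j ω)
      simpa using this
    -- n ≥ 2
    have hij_ne : i₀ ≠ j₀ := by
      intro h
      rw [h] at hij
      have : A j₀ j₀ = 0 := by
        simp [hAdef, sub_self, abs_zero, Real.zero_rpow hp0.ne']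
      linarith
    have hn2R : (2:ℝ) ≤ (n:ℝ) := by
      have h1 := i₀.isLt
      have h2 := j₀.isLt
      have h3 : i₀.val ≠ j₀.val := fun h => hij_ne (Fin.ext h)
      have : 2 ≤ n := by omega
      exact_mod_cast this
    -- dimension
    set L : ℝ := Real.log (2 * (n:ℝ)^2) with hLdef
    have hL0 : 0 < L := Real.log_pos (by nlinarith)
    set val : ℝ := 4 * B'^2 * L / ε^2 with hvaldef
    have hval0 : 0 ≤ val := by positivity
    set d : ℕ := ⌈val⌉₊ + 1 with hddef
    have hd_lb : val < (d:ℝ) := by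
      have := Nat.le_ceil val
      rw [hddef]; push_cast; linarith
    have hd_ub : (d:ℝ) ≤ val + 2 := by
      have := Nat.ceil_lt_add_one hval0
      rw [hddef]; push_cast; linarith
    have hdpos : (0:ℝ) < (d:ℝ) := by
      rw [hddef]; push_cast; positivity
    -- product space setup
    haveI := hν_prob
    set P : Measure (Fin d → Ω) := Measure.pi (fun _ : Fin d => ν) with hPdef
    haveI : IsProbabilityMeasure P := by rw [hPdef]; infer_instance
    set δ : ℝ≥0∞ := ENNReal.ofReal (Real.exp (-(d:ℝ) * ε^2 / (4 * B'^2))) with hδdef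
    have hmean2 : ∀ i j, (∫ ω, (B' - Z i j ω) ∂ν) = B' - A i j := fun i j => by
      rw [integral_sub (integrable_const B') (hZint i j), integral_const]
      simp [hZmean i j]
    set Sp : Fin n → Fin n → Set (Fin d → Ω) := fun i j =>
      {σ | (d:ℝ) * ε ≤ ∑ s, (Z i j (σ s) - ∫ ω, Z i j ω ∂ν)} with hSpdef
    set Sm : Fin n → Fin n → Set (Fin d → Ω) := fun i j =>
      {σ | (d:ℝ) * ε ≤ ∑ s, ((B' - Z i j (σ s)) - ∫ ω, (B' - Z i j ω) ∂ν)} with hSmdef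
    have hSp_bound : ∀ i j, P (Sp i j) ≤ δ := fun i j =>
      chernoff_pi' ν (Z i j) (hZ_meas i j) B' ε hB'0 (fun ω => hZ0 i j ω)
        (fun ω => hZB' i j ω) hε0 hεB'.le d
    have hSm_bound : ∀ i j, P (Sm i j) ≤ δ := fun i j =>
      chernoff_pi' ν (fun ω => B' - Z i j ω) (measurable_const.sub (hZ_meas i j)) B' ε hB'0
        (fun ω => by show (0:ℝ) ≤ B' - Z i j ω; linarith [hZB' i j ω])
        (fun ω => by show B' - Z i j ω ≤ B'; linarith [hZ0 i j ω]) hε0 hεB'.le d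
    set bad : Set (Fin d → Ω) := ⋃ i, ⋃ j, (Sp i j ∪ Sm i j) with hbaddef
    have hexp_lt : Real.exp (-(d:ℝ) * ε^2 / (4 * B'^2)) < 1/(2 * (n:ℝ)^2) := by
      have hkey : L < (d:ℝ) * ε^2 / (4*B'^2) := by
        rw [lt_div_iff₀ (by positivity)]
        have h4 := (div_lt_iff₀ (by positivity : (0:ℝ) < ε^2)).mp hd_lb
        linarith
      have h5 : -(d:ℝ) * ε^2/(4*B'^2) < -L := by
        rw [neg_mul, neg_div]; exact neg_lt_neg hkey
      calc Real.exp (-(d:ℝ) * ε^2 / (4*B'^2)) < Real.exp (-L) := Real.exp_lt_exp.mpr h5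
        _ = 1/(2*(n:ℝ)^2) := by
            rw [Real.exp_neg, hLdef, Real.exp_log (by positivity), one_div]
    have hbad_lt : P bad < 1 := by
      have h1 : P bad ≤ ∑' i : Fin n, ∑' j : Fin n, P (Sp i j ∪ Sm i j) :=
        (measure_iUnion_le _).trans (ENNReal.tsum_le_tsum fun i => measure_iUnion_le _)
      have h2 : ∀ i j, P (Sp i j ∪ Sm i j) ≤ 2 * δ := fun i j =>
        (measure_union_le _ _).trans
          (by rw [two_mul]; exact add_le_add (hSp_bound i j) (hSm_bound i j))
      have h3 : P bad ≤ (n:ℝ≥0∞) * ((n:ℝ≥0∞) * (2 * δ)) := by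
        refine h1.trans ?_
        calc ∑' i : Fin n, ∑' j : Fin n, P (Sp i j ∪ Sm i j)
            ≤ ∑' _i : Fin n, ∑' _j : Fin n, 2*δ :=
              ENNReal.tsum_le_tsum fun i => ENNReal.tsum_le_tsum fun j => h2 i j
          _ = (n:ℝ≥0∞) * ((n:ℝ≥0∞) * (2*δ)) := by
              simp [tsum_fintype, Finset.sum_const, Finset.card_univ, nsmul_eq_mul, mul_assoc]
      refine lt_of_le_of_lt h3 ?_
      have hn0 : (0:ℝ) < (n:ℝ) := by linarith
      have hreal : (n:ℝ) * ((n:ℝ) * (2 * Real.exp (-(d:ℝ)*ε^2/(4*B'^2)))) < 1 := by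
        have h6 : (2*(n:ℝ)^2) * Real.exp (-(d:ℝ)*ε^2/(4*B'^2))
            < (2*(n:ℝ)^2) * (1/(2*(n:ℝ)^2)) :=
          mul_lt_mul_of_pos_left hexp_lt (by positivity)
        have h7 : (2*(n:ℝ)^2) * (1/(2*(n:ℝ)^2)) = 1 := by field_simp
        nlinarith [h6]
      calc (n:ℝ≥0∞) * ((n:ℝ≥0∞) * (2 * δ))
          = ENNReal.ofReal ((n:ℝ) * ((n:ℝ) * (2 * Real.exp (-(d:ℝ)*ε^2/(4*B'^2))))) := by
            rw [hδdef, ← ENNReal.ofReal_natCast n, ← ENNReal.ofReal_ofNat 2,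
              ← ENNReal.ofReal_mul (by norm_num),
              ← ENNReal.ofReal_mul (by positivity),
              ← ENNReal.ofReal_mul (by positivity)]
        _ < 1 := ENNReal.ofReal_lt_one.mpr hreal
    have hgood : ∃ σ : Fin d → Ω, σ ∉ bad := by
      by_contra hcon
      push_neg at hcon
      have hbu : bad = Set.univ := Set.eq_univ_of_forall hcon
      have huniv : P Set.univ = 1 := measure_univ
      rw [hbu, huniv] at hbad_lt
      exact lt_irrefl _ hbad_lt
    obtain ⟨σ, hσ⟩ := hgood
    have hσ' : ∀ i j, σ ∉ Sp i j ∧ σ ∉ Sm i j := by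
      intro i j
      constructor <;> intro hmem
      · exact hσ (Set.mem_iUnion.mpr ⟨i, Set.mem_iUnion.mpr ⟨j, Or.inl hmem⟩⟩)
      · exact hσ (Set.mem_iUnion.mpr ⟨i, Set.mem_iUnion.mpr ⟨j, Or.inr hmem⟩⟩)
    have hexpand : ∀ (t : Fin d → ℝ) (r : ℝ), (∑ s, (t s - r)) = (∑ s, t s) - (d:ℝ) * r := by
      intro t r
      rw [Finset.sum_sub_distrib, Finset.sum_const, Finset.card_univ, Fintype.card_fin,
        nsmul_eq_mul]
    have hsum_est : ∀ i j, |(∑ s, Z i j (σ s)) - (d:ℝ) * A i j| ≤ (d:ℝ) * ε := by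
      intro i j
      obtain ⟨hmp, hmm⟩ := hσ' i j
      simp only [hSpdef, Set.mem_setOf_eq, not_le] at hmp
      simp only [hSmdef, Set.mem_setOf_eq, not_le] at hmm
      rw [hZmean i j, hexpand (fun s => Z i j (σ s)) (A i j)] at hmp
      rw [hmean2 i j] at hmm
      have e1 : (∑ s, ((B' - Z i j (σ s)) - (B' - A i j)))
          = (d:ℝ) * A i j - ∑ s, Z i j (σ s) := by
        rw [Finset.sum_congr rfl (fun s _ =>
          show (B' - Z i j (σ s)) - (B' - A i j) = A i j - Z i j (σ s) from by ring),
          Finset.sum_sub_distrib, Finset.sum_const, Finset.card_univ, Fintype.card_fin,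
          nsmul_eq_mul]
      rw [e1] at hmm
      exact abs_le.mpr ⟨by linarith, by linarith⟩
    -- the embedding
    set c : ℝ := ((1:ℝ)/(d:ℝ)) ^ (1/p) with hcdef
    have hc0 : 0 ≤ c := Real.rpow_nonneg (by positivity) _
    refine ⟨d, fun i s => g i (σ s) * c, ?_, ?_⟩
    · -- dimension bound
      have hlog2 : (0.6931:ℝ) < Real.log 2 := by
        have := Real.log_two_gt_d9; linarith
      have hlogn : Real.log 2 ≤ Real.log n :=
        Real.log_le_log (by norm_num) hn2R
      have hlogn0 : 0 < Real.log n := by linarith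
      have hL_eq : L = Real.log 2 + 2 * Real.log n := by
        rw [hLdef, Real.log_mul (by norm_num) (by positivity), Real.log_pow]
        push_cast; ring
      have he2 : (7.29:ℝ) < Real.exp 1 ^ 2 := by nlinarith [Real.exp_one_gt_d9]
      set G : ℝ := (2*K)^(2*p) with hGdef
      have hG0 : 0 ≤ G := Real.rpow_nonneg (by linarith) _
      have hB'G : B'^2 ≤ G := by
        have h1 : B' ≤ (2*K)^p := by
          rw [Real.mul_rpow (by norm_num) hK.le]
          exact mul_le_mul_of_nonneg_left hVK h2p.le
        have h2 : ((2*K)^p)^2 = (2*K)^(2*p) := by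
          rw [← Real.rpow_natCast ((2*K)^p) 2, ← Real.rpow_mul (by positivity)]
          norm_num [mul_comm]
        calc B'^2 ≤ ((2*K)^p)^2 := by nlinarith [hB'0.le]
          _ = G := h2
      have hεB2 : ε^2 < B'^2 := by nlinarith
      rw [le_div_iff₀ (by positivity : (0:ℝ) < ε^2)]
      have hvE : val * ε^2 = 4*B'^2*L := by
        rw [hvaldef]; field_simp
      have hdE : (d:ℝ) * ε^2 ≤ 4*B'^2*L + 2*ε^2 := by
        calc (d:ℝ) * ε^2 ≤ (val + 2) * ε^2 :=
              mul_le_mul_of_nonneg_right hd_ub (sq_nonneg ε)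
          _ = 4*B'^2*L + 2*ε^2 := by rw [add_mul, hvE]
      have hBL : B'^2 * L = B'^2 * Real.log 2 + 2 * (B'^2 * Real.log n) := by
        rw [hL_eq]; ring
      have hint1 : B'^2 * Real.log 2 ≤ B'^2 * Real.log n :=
        mul_le_mul_of_nonneg_left hlogn (by positivity)
      have hint2 : B'^2 * Real.log n ≤ G * Real.log n :=
        mul_le_mul_of_nonneg_right hB'G hlogn0.le
      have hint3 : G * 0.6931 ≤ G * Real.log n :=
        mul_le_mul_of_nonneg_left (by linarith) hG0
      have hint4 : (0:ℝ) ≤ (Real.exp 1 ^ 2 - 7.29) * (G * Real.log n) :=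
        mul_nonneg (by linarith) (mul_nonneg hG0 hlogn0.le)
      linarith [hdE, hBL, hint1, hint2, hint3, hint4, hεB2, hG0, hlogn0, hB'G,
        mul_nonneg hG0 hlogn0.le]
    · -- the distance estimates
      intro i j
      have hterm : ∀ s : Fin d, |g i (σ s) * c - g j (σ s) * c| ^ p
          = Z i j (σ s) * ((1:ℝ)/(d:ℝ)) := by
        intro s
        rw [← sub_mul, abs_mul, abs_of_nonneg hc0,
          Real.mul_rpow (abs_nonneg _) hc0, hcdef,
          ← Real.rpow_mul (by positivity), one_div_mul_cancel hp0.ne', Real.rpow_one]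
      have hsum : (∑ s, |g i (σ s) * c - g j (σ s) * c| ^ p)
          = (∑ s, Z i j (σ s)) / (d:ℝ) := by
        rw [Finset.sum_congr rfl (fun s _ => hterm s), ← Finset.sum_mul, mul_one_div]
      rw [hsum]
      have hu0 : 0 ≤ (∑ s, Z i j (σ s)) / (d:ℝ) :=
        div_nonneg (Finset.sum_nonneg fun s _ => hZ0 i j (σ s)) hdpos.le
      have hdiff_le : |(∑ s, Z i j (σ s))/(d:ℝ) - A i j| ≤ ε := by
        have h := hsum_est i j
        have e2 : (∑ s, Z i j (σ s))/(d:ℝ) - A i j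
            = ((∑ s, Z i j (σ s)) - (d:ℝ) * A i j) / (d:ℝ) := by
          field_simp
        rw [e2, abs_div, abs_of_pos hdpos, div_le_iff₀ hdpos]
        linarith [h]
      exact abs_rpow_sub_rpow_le hu0 (hA0 i j) hε0.le (by positivity)
        ((div_le_one hp0).mpr hp) hdiff_le
end

section
/- Fix an integer N ≥ 8. Then ℓ_∞^N has Rademacher type 2 with constant at most e·√(log N): that is, for every m ∈ ℕ and every x_1,…,x_m ∈ ℝ^N, 2^{−m}·Σ_{ε∈{−1,1}^m} ‖Σ_{i=1}^m ε_i x_i‖_{ℓ_∞^N}² ≤ e²·(log N)·Σ_{i=1}^m ‖x_i‖_{ℓ_∞^N}². -/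
open Nat Finset


lemma two_pow_mul_factorial_le (i : ℕ) : 2 ^ i * i.factorial ≤ (2 * i).factorial := by
  induction i with
  | zero => simp
  | succ n ih =>
    have h : 2 * (n + 1) = 2 * n + 1 + 1 := by ring
    rw [h, Nat.factorial_succ, Nat.factorial_succ, pow_succ, Nat.factorial_succ]
    calc 2 ^ n * 2 * ((n + 1) * n.factorial)
        = (n + 1) * 2 * (2 ^ n * n.factorial) := by ring
      _ ≤ (2 * n + 1 + 1) * ((2 * n + 1) * (2 * n).factorial) := by
          exact Nat.mul_le_mul (by omega)
            (le_trans ih (Nat.le_mul_of_pos_left _ (by omega)))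

-- (2k)! = 2^k * k! * (2k-1)‼
lemma two_mul_factorial_eq (k : ℕ) :
    (2 * k).factorial = 2 ^ k * k.factorial * (2 * k - 1)‼ := by
  cases k with
  | zero => simp
  | succ n =>
    have h : 2 * (n + 1) = (2 * n + 1) + 1 := by ring
    rw [h]
    rw [Nat.factorial_eq_mul_doubleFactorial]
    have h2 : 2 * n + 1 + 1 = 2 * (n + 1) := by ring
    have h3 : 2 * (n + 1) - 1 = 2 * n + 1 := by omega
    rw [h2, h3, Nat.doubleFactorial_two_mul]

lemma choose_doubleFactorial_le (k i : ℕ) (h : i ≤ k) :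
    (2 * k).choose (2 * i) * (2 * i - 1)‼ ≤ (2 * k - 1)‼ * k.choose i := by
  have hpos : 0 < 2 ^ k * i.factorial * (k - i).factorial :=
    Nat.mul_pos (Nat.mul_pos (Nat.pow_pos (by norm_num)) i.factorial_pos)
      (k - i).factorial_pos
  apply Nat.le_of_mul_le_mul_right _ hpos
  have hik : 2 * i ≤ 2 * k := by omega
  have key : (2 * k).choose (2 * i) * (2 * i).factorial * (2 * (k - i)).factorial
      = (2 * k).factorial := by
    have := Nat.choose_mul_factorial_mul_factorial hik
    have h2 : 2 * k - 2 * i = 2 * (k - i) := by omega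
    rw [h2] at this; exact this
  calc (2 * k).choose (2 * i) * (2 * i - 1)‼ * (2 ^ k * i.factorial * (k - i).factorial)
      = (2 * k).choose (2 * i) * (2 ^ i * i.factorial * (2 * i - 1)‼)
          * (2 ^ (k - i) * (k - i).factorial) := by
        have hpow : (2:ℕ) ^ k = 2 ^ i * 2 ^ (k - i) := by
          rw [← pow_add]; congr 1; omega
        rw [hpow]; ring
    _ = (2 * k).choose (2 * i) * (2 * i).factorial * (2 ^ (k - i) * (k - i).factorial) := by
        rw [← two_mul_factorial_eq]
    _ ≤ (2 * k).choose (2 * i) * (2 * i).factorial * (2 * (k - i)).factorial := by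
        exact Nat.mul_le_mul_left _ (two_pow_mul_factorial_le _)
    _ = (2 * k).factorial := key
    _ = 2 ^ k * k.factorial * (2 * k - 1)‼ := two_mul_factorial_eq k
    _ = (2 * k - 1)‼ * (k.choose i * i.factorial * (k - i).factorial) * 2 ^ k := by
        rw [Nat.choose_mul_factorial_mul_factorial h]; ring
    _ = (2 * k - 1)‼ * k.choose i * (2 ^ k * i.factorial * (k - i).factorial) := by ring

lemma two_mul_pow_le (k : ℕ) (hk : 1 ≤ k) : 2 * k ^ k ≤ (k + 1) ^ k := by
  have h := add_pow (R := ℕ) k 1 k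
  -- (k+1)^k = ∑ j ∈ range (k+1), k^j * 1^(k-j) * choose k j
  rw [h]
  have hsub : ({k - 1, k} : Finset ℕ) ⊆ Finset.range (k + 1) := by
    intro j hj; simp at hj; rcases hj with rfl | rfl <;> simp <;> omega
  calc 2 * k ^ k = k ^ (k-1) * 1 ^ (k - (k-1)) * k.choose (k-1) + k ^ k * 1 ^ (k - k) * k.choose k := by
        have hc : k.choose (k - 1) = k := by
          rw [Nat.choose_symm hk, Nat.choose_one_right]
        rw [Nat.choose_self, hc]
        have h1 : k ^ (k - 1) * k = k ^ k := by
          rw [← pow_succ]; congr 1; omega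
        simp only [one_pow, mul_one]
        rw [h1]; ring
    _ = ∑ j ∈ ({k - 1, k} : Finset ℕ), k ^ j * 1 ^ (k - j) * k.choose j := by
        rw [Finset.sum_pair (by omega)]
    _ ≤ ∑ j ∈ Finset.range (k + 1), k ^ j * 1 ^ (k - j) * k.choose j :=
        Finset.sum_le_sum_of_subset hsub

lemma doubleFactorial_le_pow (k : ℕ) : (2 * k - 1)‼ ≤ k ^ k := by
  induction k with
  | zero => simp
  | succ n ih =>
    cases Nat.eq_zero_or_pos n with
    | inl h => subst h; simp [Nat.doubleFactorial]
    | inr hn =>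
      have h1 : 2 * (n + 1) - 1 = 2 * n + 1 := by omega
      rw [h1]
      have h2 : (2 * n + 1)‼ = (2 * n + 1) * (2 * n - 1)‼ := by
        cases n with
        | zero => omega
        | succ m =>
          have : 2 * (m + 1) + 1 = (2 * m + 1) + 2 := by ring
          rw [this, Nat.doubleFactorial_add_two]
          congr 2 <;> omega
      rw [h2]
      calc (2 * n + 1) * (2 * n - 1)‼ ≤ (2 * n + 1) * n ^ n := Nat.mul_le_mul_left _ ih
        _ ≤ (2 * n + 2) * n ^ n := by apply Nat.mul_le_mul_right; omega
        _ = (n + 1) * (2 * n ^ n) := by ring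
        _ ≤ (n + 1) * (n + 1) ^ n := Nat.mul_le_mul_left _ (two_mul_pow_le n hn)
        _ = (n + 1) ^ (n + 1) := by rw [← pow_succ']


lemma sum_range_even_odd (g : ℕ → ℝ) (n : ℕ) :
    ∑ j ∈ Finset.range (2 * n), g j = ∑ i ∈ Finset.range n, (g (2 * i) + g (2 * i + 1)) := by
  induction n with
  | zero => simp
  | succ n ih =>
    have h : 2 * (n + 1) = (2 * n + 1) + 1 := by ring
    rw [h, Finset.sum_range_succ, Finset.sum_range_succ, ih, Finset.sum_range_succ]
    ring

lemma add_pow_add_sub_pow (x y : ℝ) (k : ℕ) :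
    (x + y) ^ (2 * k) + (x - y) ^ (2 * k)
      = ∑ i ∈ Finset.range (k + 1), 2 * ((2 * k).choose (2 * i) : ℝ) * (x ^ 2) ^ i * (y ^ 2) ^ (k - i) := by
  have hx : (x + y) ^ (2 * k) = ∑ j ∈ Finset.range (2 * k + 1), x ^ j * y ^ (2 * k - j) * ((2 * k).choose j : ℝ) :=
    add_pow x y (2 * k)
  have hy : (x - y) ^ (2 * k) = ∑ j ∈ Finset.range (2 * k + 1), x ^ j * (-y) ^ (2 * k - j) * ((2 * k).choose j : ℝ) := by
    rw [sub_eq_add_neg]; exact add_pow x (-y) (2 * k)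
  set g : ℕ → ℝ := fun j => x ^ j * y ^ (2 * k - j) * ((2 * k).choose j : ℝ)
      + x ^ j * (-y) ^ (2 * k - j) * ((2 * k).choose j : ℝ) with hg
  have hsum : (x + y) ^ (2 * k) + (x - y) ^ (2 * k) = ∑ j ∈ Finset.range (2 * (k + 1)), g j := by
    have h2 : 2 * (k + 1) = (2 * k + 1) + 1 := by ring
    rw [h2, Finset.sum_range_succ, hx, hy, ← Finset.sum_add_distrib]
    have hlast : g (2 * k + 1) = 0 := by
      simp [hg, Nat.choose_succ_self]
    rw [hlast, add_zero]
  rw [hsum, sum_range_even_odd]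
  apply Finset.sum_congr rfl
  intro i hi
  simp only [Finset.mem_range] at hi
  have hik : i ≤ k := by omega
  have hodd : g (2 * i + 1) = 0 := by
    rcases Nat.lt_or_ge (2 * k) (2 * i + 1) with h | h
    · have : (2 * k).choose (2 * i + 1) = 0 := Nat.choose_eq_zero_of_lt h
      simp [hg, this]
    · have hsub : 2 * k - (2 * i + 1) = 2 * (k - i) - 1 := by omega
      have hoddexp : Odd (2 * (k - i) - 1) := by
        have : 1 ≤ k - i := by omega
        exact ⟨k - i - 1, by omega⟩
      simp only [hg, hsub, hoddexp.neg_pow]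
      ring
  have heven : g (2 * i) = 2 * ((2 * k).choose (2 * i) : ℝ) * (x ^ 2) ^ i * (y ^ 2) ^ (k - i) := by
    have hsub : 2 * k - 2 * i = 2 * (k - i) := by omega
    have hevenexp : Even (2 * (k - i)) := even_two_mul _
    simp only [hg, hsub, hevenexp.neg_pow]
    rw [← pow_mul, ← pow_mul]
    have : 2 * (k - i) = (k - i) * 2 := by ring
    rw [this]; ring
  rw [hodd, heven, add_zero]






lemma khintchine : ∀ (m : ℕ) (a : Fin m → ℝ) (k : ℕ),
    ∑ ε : Fin m → Bool, (∑ i, (if ε i then (1 : ℝ) else -1) * a i) ^ (2 * k)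
      ≤ 2 ^ m * ((2 * k - 1)‼ : ℝ) * (∑ i, a i ^ 2) ^ k := by
  intro m
  induction m with
  | zero =>
    intro a k
    cases k with
    | zero => simp
    | succ n => simp
  | succ m ih =>
    intro a k
    set s : ℝ := ∑ i : Fin m, a i.succ ^ 2 with hs
    have hsplit : ∑ ε : Fin (m+1) → Bool, (∑ i, (if ε i then (1 : ℝ) else -1) * a i) ^ (2 * k)
        = ∑ p : Bool × (Fin m → Bool),
            (∑ i : Fin (m+1), (if (Fin.cons p.1 p.2 : Fin (m+1) → Bool) i then (1 : ℝ) else -1) * a i) ^ (2 * k) := by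
      exact (Equiv.sum_comp (Fin.consEquiv (fun _ : Fin (m+1) => Bool))
        (fun ε => (∑ i, (if ε i then (1 : ℝ) else -1) * a i) ^ (2 * k))).symm
    rw [hsplit, Fintype.sum_prod_type]
    have hinner : ∀ (b : Bool) (ε : Fin m → Bool),
        ∑ i : Fin (m+1), (if (Fin.cons b ε : Fin (m+1) → Bool) i then (1 : ℝ) else -1) * a i
          = (∑ i : Fin m, (if ε i then (1 : ℝ) else -1) * a i.succ) + (if b then (1:ℝ) else -1) * a 0 := by
      intro b ε
      rw [Fin.sum_univ_succ]
      simp only [Fin.cons_zero, Fin.cons_succ]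
      ring
    rw [Fintype.sum_bool]
    simp only [hinner]
    have hexp : ∀ ε : Fin m → Bool,
        ((∑ i : Fin m, (if ε i then (1:ℝ) else -1) * a i.succ) + 1 * a 0) ^ (2*k)
          + ((∑ i : Fin m, (if ε i then (1:ℝ) else -1) * a i.succ) + (-1) * a 0) ^ (2*k)
        = ∑ j ∈ Finset.range (k+1), 2 * ((2*k).choose (2*j) : ℝ)
            * ((∑ i : Fin m, (if ε i then (1:ℝ) else -1) * a i.succ) ^ 2) ^ j * (a 0 ^ 2) ^ (k - j) := by
      intro ε
      have := add_pow_add_sub_pow (∑ i : Fin m, (if ε i then (1:ℝ) else -1) * a i.succ) (a 0) k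
      rw [one_mul, neg_one_mul, ← sub_eq_add_neg]
      exact this
    simp only [if_true, if_false, Bool.cond_eq_ite]  -- normalize ifs over b
    rw [← Finset.sum_add_distrib]
    calc ∑ ε : Fin m → Bool,
          (((∑ i : Fin m, (if ε i then (1:ℝ) else -1) * a i.succ) + (if True then (1:ℝ) else -1) * a 0) ^ (2*k)
            + ((∑ i : Fin m, (if ε i then (1:ℝ) else -1) * a i.succ) + (if False then (1:ℝ) else -1) * a 0) ^ (2*k))
        = ∑ ε : Fin m → Bool, ∑ j ∈ Finset.range (k+1), 2 * ((2*k).choose (2*j) : ℝ)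
            * ((∑ i : Fin m, (if ε i then (1:ℝ) else -1) * a i.succ) ^ 2) ^ j * (a 0 ^ 2) ^ (k - j) := by
          apply Finset.sum_congr rfl
          intro ε _
          simp only [if_true, if_false]
          exact hexp ε
      _ = ∑ j ∈ Finset.range (k+1), 2 * ((2*k).choose (2*j) : ℝ) * (a 0 ^ 2) ^ (k - j)
            * ∑ ε : Fin m → Bool, ((∑ i : Fin m, (if ε i then (1:ℝ) else -1) * a i.succ) ^ 2) ^ j := by
          rw [Finset.sum_comm]
          apply Finset.sum_congr rfl; intro j _
          rw [Finset.mul_sum]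
          apply Finset.sum_congr rfl; intro ε _; ring
      _ ≤ ∑ j ∈ Finset.range (k+1), 2 * ((2*k).choose (2*j) : ℝ) * (a 0 ^ 2) ^ (k - j)
            * (2 ^ m * ((2*j-1)‼ : ℝ) * s ^ j) := by
          apply Finset.sum_le_sum; intro j _
          apply mul_le_mul_of_nonneg_left _ (by positivity)
          have h := ih (fun i => a i.succ) j
          simpa [pow_mul, ← hs] using h
      _ ≤ ∑ j ∈ Finset.range (k+1), 2 ^ (m+1) * ((2*k-1)‼ : ℝ) * (k.choose j : ℝ)
            * s ^ j * (a 0 ^ 2) ^ (k - j) := by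
          have hs0 : (0:ℝ) ≤ s := by
            rw [hs]; exact Finset.sum_nonneg fun i _ => sq_nonneg _
          apply Finset.sum_le_sum; intro j hj
          have hjk : j ≤ k := by simp only [Finset.mem_range] at hj; omega
          have hcast : ((2*k).choose (2*j) : ℝ) * ((2*j-1)‼ : ℝ)
              ≤ ((2*k-1)‼ : ℝ) * (k.choose j : ℝ) := by
            exact_mod_cast choose_doubleFactorial_le k j hjk
          have hsj : (0:ℝ) ≤ s ^ j := pow_nonneg hs0 j
          calc 2 * ((2*k).choose (2*j) : ℝ) * (a 0 ^ 2) ^ (k - j)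
                * (2 ^ m * ((2*j-1)‼ : ℝ) * s ^ j)
              = (2 * 2 ^ m) * (((2*k).choose (2*j) : ℝ) * ((2*j-1)‼:ℝ))
                * (s ^ j * (a 0 ^ 2) ^ (k-j)) := by ring
            _ ≤ (2 * 2 ^ m) * (((2*k-1)‼:ℝ) * (k.choose j : ℝ))
                * (s ^ j * (a 0 ^ 2) ^ (k-j)) := by
                apply mul_le_mul_of_nonneg_right
                  (mul_le_mul_of_nonneg_left hcast (by positivity)) (by positivity)
            _ = 2 ^ (m+1) * ((2*k-1)‼ : ℝ) * (k.choose j : ℝ) * s ^ j * (a 0 ^ 2) ^ (k - j) := by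
                ring
      _ = 2 ^ (m+1) * ((2 * k - 1)‼ : ℝ) * (∑ i, a i ^ 2) ^ k := by
          rw [Fin.sum_univ_succ, add_comm (a 0 ^ 2), ← hs, add_pow, Finset.mul_sum]
          apply Finset.sum_congr rfl; intro j _
          ring






lemma main_aux (N m k : ℕ) (hN : 0 < N) (hk : 1 ≤ k) (x : Fin m → Fin N → ℝ) :
    ((∑ ε : Fin m → Bool, ‖∑ i, (if ε i then (1 : ℝ) else -1) • x i‖ ^ 2) / 2 ^ m) ^ k
      ≤ (N : ℝ) * (k : ℝ) ^ k * (∑ i, ‖x i‖ ^ 2) ^ k := by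
  set σ2 : ℝ := ∑ i, ‖x i‖ ^ 2 with hσ2def
  have hσ2 : 0 ≤ σ2 := Finset.sum_nonneg fun i _ => by positivity
  set S : (Fin m → Bool) → Fin N → ℝ := fun ε => ∑ i, (if ε i then (1 : ℝ) else -1) • x i
    with hS
  show ((∑ ε : Fin m → Bool, ‖S ε‖ ^ 2) / 2 ^ m) ^ k ≤ (N : ℝ) * (k : ℝ) ^ k * σ2 ^ k
  have hcard : (Finset.univ : Finset (Fin m → Bool)).card = 2 ^ m := by
    simp [Fintype.card_fun]
  have hpm := pow_sum_div_card_le_sum_pow (f := fun ε => ‖S ε‖ ^ 2)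
    (s := (Finset.univ : Finset (Fin m → Bool))) (fun ε _ => by positivity) (k - 1)
  rw [hcard] at hpm
  push_cast at hpm
  have hk' : k - 1 + 1 = k := by omega
  rw [hk'] at hpm
  have step1 : ((∑ ε : Fin m → Bool, ‖S ε‖ ^ 2) / 2 ^ m) ^ k
      ≤ (∑ ε : Fin m → Bool, (‖S ε‖ ^ 2) ^ k) / 2 ^ m := by
    rw [div_pow, div_le_div_iff₀ (by positivity) (by positivity)]
    calc (∑ ε : Fin m → Bool, ‖S ε‖ ^ 2) ^ k * 2 ^ m
        = ((∑ ε : Fin m → Bool, ‖S ε‖ ^ 2) ^ k / (2:ℝ) ^ (m * (k-1)))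
            * (2 ^ (m*(k-1)) * 2 ^ m) := by
          field_simp
      _ ≤ (∑ ε : Fin m → Bool, (‖S ε‖ ^ 2) ^ k) * ((2:ℝ) ^ m) ^ k := by
          apply mul_le_mul _ _ (by positivity) (Finset.sum_nonneg fun ε _ => by positivity)
          · calc (∑ ε : Fin m → Bool, ‖S ε‖ ^ 2) ^ k / (2:ℝ) ^ (m * (k-1))
                = (∑ ε : Fin m → Bool, ‖S ε‖ ^ 2) ^ k / ((2:ℝ) ^ m) ^ (k-1) := by
                  rw [← pow_mul]
              _ ≤ _ := hpm
          · rw [← pow_mul, ← pow_add]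
            apply pow_le_pow_right₀ one_le_two
            have hmk : m * (k - 1) + m = m * k := by
              cases k with
              | zero => omega
              | succ n => simp [Nat.mul_succ]
            omega
  refine step1.trans ?_
  rw [div_le_iff₀ (by positivity : (0:ℝ) < 2 ^ m)]
  have hsup : ∀ ε : Fin m → Bool, (‖S ε‖ ^ 2) ^ k ≤ ∑ j : Fin N, (S ε j) ^ (2 * k) := by
    intro ε
    have hne : (Finset.univ : Finset (Fin N)).Nonempty :=
      Finset.univ_nonempty_iff.mpr (Fin.pos_iff_nonempty.mp hN)
    obtain ⟨j0, -, hj0⟩ := Finset.exists_mem_eq_sup Finset.univ hne (fun j => ‖S ε j‖₊)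
    have hnorm : ‖S ε‖ = |S ε j0| := by
      rw [Pi.norm_def, hj0]
      simp [Real.norm_eq_abs]
    have heq : (‖S ε‖ ^ 2) ^ k = (S ε j0) ^ (2 * k) := by
      rw [hnorm, ← pow_mul]
      exact (even_two_mul k).pow_abs _
    rw [heq]
    exact Finset.single_le_sum (f := fun j => S ε j ^ (2 * k))
      (fun j _ => (even_two_mul k).pow_nonneg _) (Finset.mem_univ j0)
  calc ∑ ε : Fin m → Bool, (‖S ε‖ ^ 2) ^ k
      ≤ ∑ ε : Fin m → Bool, ∑ j : Fin N, (S ε j) ^ (2 * k) :=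
        Finset.sum_le_sum fun ε _ => hsup ε
    _ = ∑ j : Fin N, ∑ ε : Fin m → Bool, (S ε j) ^ (2 * k) := Finset.sum_comm
    _ ≤ ∑ _j : Fin N, (2:ℝ) ^ m * (k:ℝ) ^ k * σ2 ^ k := by
        apply Finset.sum_le_sum; intro j _
        have hSj : ∀ ε : Fin m → Bool, S ε j = ∑ i, (if ε i then (1:ℝ) else -1) * x i j := by
          intro ε
          rw [hS]
          simp only [Finset.sum_apply, Pi.smul_apply, smul_eq_mul]
        have hbound1 : ∑ ε : Fin m → Bool, (S ε j) ^ (2 * k)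
            ≤ 2 ^ m * ((2 * k - 1)‼ : ℝ) * (∑ i, x i j ^ 2) ^ k := by
          simp only [hSj]
          exact khintchine m (fun i => x i j) k
        refine hbound1.trans ?_
        have hvar : ∑ i, x i j ^ 2 ≤ σ2 := by
          apply Finset.sum_le_sum; intro i _
          have hle := norm_le_pi_norm (x i) j
          calc x i j ^ 2 = ‖x i j‖ ^ 2 := by rw [Real.norm_eq_abs, sq_abs]
            _ ≤ ‖x i‖ ^ 2 := pow_le_pow_left₀ (norm_nonneg _) hle 2
        have hdf : ((2 * k - 1)‼ : ℝ) ≤ (k:ℝ) ^ k := by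
          exact_mod_cast doubleFactorial_le_pow k
        apply mul_le_mul (mul_le_mul_of_nonneg_left hdf (by positivity))
          (pow_le_pow_left₀ (Finset.sum_nonneg fun i _ => sq_nonneg _) hvar k)
          (by positivity) (by positivity)
    _ = (N:ℝ) * (k:ℝ) ^ k * σ2 ^ k * 2 ^ m := by
        rw [Finset.sum_const, Finset.card_univ, Fintype.card_fin, nsmul_eq_mul]
        ring

/-- **Estimate (2.19) in the proof of Proposition 2.2 (`ℓ_∞^N` has Rademacher type 2 with
constant `e √(log N)`).**  For every `N ≥ 8`, every `m ∈ ℕ` and every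
`x₁, …, x_m ∈ ℓ_∞^N`,
`2^{-m} ∑_{ε ∈ {-1,1}^m} ‖∑ᵢ εᵢ xᵢ‖_∞² ≤ e² (log N) ∑ᵢ ‖xᵢ‖_∞²`,
where `‖·‖` denotes the supremum norm on `ℝ^N`. -/
theorem linfty_rademacher_type_two
    (N : ℕ) (hN : 8 ≤ N) (m : ℕ) (x : Fin m → Fin N → ℝ) :
    (∑ ε : Fin m → Bool, ‖∑ i, (if ε i then (1 : ℝ) else -1) • x i‖ ^ 2) / 2 ^ m
      ≤ Real.exp 1 ^ 2 * Real.log N * ∑ i, ‖x i‖ ^ 2 := by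
  have hN0 : (0:ℝ) < N := by positivity
  have hN8 : (8:ℝ) ≤ N := by exact_mod_cast hN
  have hlog2 : (2:ℝ) ≤ Real.log N := by
    have h8 : (2:ℝ) ≤ Real.log 8 := by
      rw [Real.le_log_iff_exp_le (by norm_num)]
      have h1 : Real.exp 1 ≤ 2.7182818286 := Real.exp_one_lt_d9.le
      calc Real.exp 2 = Real.exp 1 ^ 2 := by
            rw [← Real.exp_nat_mul]; norm_num
        _ ≤ 2.7182818286 ^ 2 := pow_le_pow_left₀ (Real.exp_pos 1).le h1 2
        _ ≤ 8 := by norm_num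
    exact h8.trans (Real.log_le_log (by norm_num) hN8)
  have hlog0 : (0:ℝ) < Real.log N := lt_of_lt_of_le two_pos hlog2
  set k := Nat.ceil (Real.log N) with hkdef
  have hk1 : 1 ≤ k := Nat.one_le_ceil_iff.mpr hlog0
  have hklog : Real.log N ≤ k := Nat.le_ceil _
  have hkle : (k:ℝ) ≤ Real.log N + 1 := (Nat.ceil_lt_add_one hlog0.le).le
  have hσ2 : 0 ≤ ∑ i, ‖x i‖ ^ 2 := Finset.sum_nonneg fun i _ => by positivity
  have hC0 : 0 ≤ Real.exp 1 ^ 2 * Real.log N * ∑ i, ‖x i‖ ^ 2 :=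
    mul_nonneg (mul_nonneg (by positivity) hlog0.le) hσ2
  apply le_of_pow_le_pow_left₀ (by omega : k ≠ 0) hC0
  have hnum : (N:ℝ) * (k:ℝ) ^ k * (∑ i, ‖x i‖ ^ 2) ^ k
      ≤ (Real.exp 1 ^ 2 * Real.log N * ∑ i, ‖x i‖ ^ 2) ^ k := by
    have h1 : (N:ℝ) ≤ Real.exp 1 ^ k := by
      rw [← Real.exp_nat_mul, mul_one]
      calc (N:ℝ) = Real.exp (Real.log N) := (Real.exp_log hN0).symm
        _ ≤ Real.exp k := Real.exp_le_exp.mpr hklog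
    have h2 : (k:ℝ) ≤ Real.exp 1 * Real.log N := by
      have he : (3:ℝ)/2 ≤ Real.exp 1 := by
        have := Real.add_one_le_exp (1:ℝ); linarith
      calc (k:ℝ) ≤ Real.log N + 1 := hkle
        _ ≤ Real.log N + Real.log N / 2 := by linarith
        _ = 3/2 * Real.log N := by ring
        _ ≤ Real.exp 1 * Real.log N := mul_le_mul_of_nonneg_right he hlog0.le
    calc (N:ℝ) * (k:ℝ) ^ k * (∑ i, ‖x i‖ ^ 2) ^ k
        ≤ Real.exp 1 ^ k * (Real.exp 1 * Real.log N) ^ k * (∑ i, ‖x i‖ ^ 2) ^ k := by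
          apply mul_le_mul_of_nonneg_right _ (by positivity)
          exact mul_le_mul h1 (pow_le_pow_left₀ (Nat.cast_nonneg k) h2 k)
            (by positivity) (by positivity)
      _ = (Real.exp 1 ^ 2 * Real.log N * ∑ i, ‖x i‖ ^ 2) ^ k := by
          ring
  exact le_trans (main_aux N m k (by omega) hk1 x) hnum
end
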